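/- Stationary phase analysis on the homogeneous tree: let Q ≥ 2 be an integer, γ₀ = 2/(Q^{1/2}+Q^{−1/2}), 0 < α < 2, and ψ(λ) = (1 − γ₀ cos λ)^{α/2}. Then: (i) the stationary points of ψ on ℝ are exactly the points of πℤ, with ψ″(0) > 0 and ψ″(π) < 0; (ii) there is a unique λ₀ ∈ (0, π) with ψ″(λ₀) = 0, it satisfies λ₀ ∈ (0, π/2), and ψ″ > 0 on [0, λ₀) and ψ″ < 0 on (λ₀, π]; consequently ψ′ is strictly increasing on [0, λ₀] from 0 to M := ψ′(λ₀) > 0 and strictly decreasing on [λ₀, π] from M to 0; (iii) for every t > 0 and r ≥ 0, the phase ψ_{t,r}(λ) := t·ψ(λ) − r·λ has, on the fundamental domain (−π, π], no stationary point if r/t > M, exactly one stationary point if r/t = M, and exactly two stationary points λ₁ ∈ [0, λ₀) and λ₂ ∈ (λ₀, π] if 0 ≤ r/t < M. -/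

import Mathlib

/-- `γ₀ = 2/(Q^{1/2} + Q^{−1/2})`. -/
noncomputable def gamma0 (Q : ℕ) : ℝ :=
  2 / (Real.sqrt Q + (Real.sqrt Q)⁻¹)

/-- The 2π-periodic phase `ψ(λ) = (1 − γ₀ cos λ)^{α/2}` on the homogeneous tree. -/
noncomputable def psiTree (Q : ℕ) (α : ℝ) (lam : ℝ) : ℝ :=
  (1 - gamma0 Q * Real.cos lam) ^ (α / 2)

/-!
`ψ′(λ) = (α/2) γ (1 - γ cos λ)^{α/2-1} sin λ` vanishes exactly where `sin` does, and
`ψ″(λ) = (α/2) γ (1 - γ cos λ)^{α/2-2} q(cos λ)` with the quadratic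
`q(c) = c - (α/2) γ c² + (α/2 - 1) γ`. As `q 0 < 0 < 1 - γ = q 1`, `q` changes sign exactly once on
`(-∞, 1]`, at some `c₀ ∈ (0, 1)`, so `ψ″` changes sign exactly once on `[0, π]`, at
`λ₀ = arccos c₀ < π/2`. Hence `ψ′` is unimodal on `[0, π]`, vanishes at both ends and is negative
on `(-π, 0)`; the stationary points of `t ψ - r λ` are the solutions of `ψ′ = r / t`, and their
number on `(-π, π]` is read off from this shape.
-/

open Real Set

section Unimodal

variable {f : ℝ → ℝ} {a b m ρ : ℝ}

lemma mem_Icc_of_nonneg_of_neg_on (hneg : ∀ x ∈ Ioo a 0, f x < 0) {x : ℝ} (hx : x ∈ Ioc a b)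
    (hfx : 0 ≤ f x) : x ∈ Icc 0 b :=
  ⟨not_lt.1 fun h => (hneg x ⟨hx.1, h⟩).not_ge hfx, hx.2⟩

lemma lt_peak (hinc : StrictMonoOn f (Icc 0 m)) (hdec : StrictAntiOn f (Icc m b))
    (hm : m ∈ Icc 0 b) {x : ℝ} (hx : x ∈ Icc 0 b) (hxm : x ≠ m) : f x < f m := by
  rcases hxm.lt_or_gt with h | h
  · exact hinc ⟨hx.1, h.le⟩ ⟨hm.1, le_rfl⟩ h
  · exact hdec ⟨le_rfl, hm.2⟩ ⟨h.le, hx.2⟩ h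

lemma ne_of_peak_lt (hneg : ∀ x ∈ Ioo a 0, f x < 0) (hinc : StrictMonoOn f (Icc 0 m))
    (hdec : StrictAntiOn f (Icc m b)) (hm : m ∈ Icc 0 b) (hρ : 0 ≤ ρ) (hlt : f m < ρ) :
    ∀ x ∈ Ioc a b, f x ≠ ρ := by
  rintro x hx rfl
  obtain rfl | hxm := eq_or_ne x m
  · exact hlt.false
  · exact (lt_peak hinc hdec hm (mem_Icc_of_nonneg_of_neg_on hneg hx hρ) hxm).not_gt hlt

lemma existsUnique_eq_peak (hneg : ∀ x ∈ Ioo a 0, f x < 0) (hinc : StrictMonoOn f (Icc 0 m))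
    (hdec : StrictAntiOn f (Icc m b)) (ha : a < 0) (hm : m ∈ Icc 0 b) (hfm : 0 ≤ f m) :
    ∃! x, x ∈ Ioc a b ∧ f x = f m := by
  refine ⟨m, ⟨⟨ha.trans_le hm.1, hm.2⟩, rfl⟩, fun x ⟨hx, hfx⟩ => ?_⟩
  by_contra hxm
  exact (lt_peak hinc hdec hm (mem_Icc_of_nonneg_of_neg_on hneg hx (hfx ▸ hfm)) hxm).ne hfx

lemma exists_two_eq_of_lt_peak (hneg : ∀ x ∈ Ioo a 0, f x < 0) (hinc : StrictMonoOn f (Icc 0 m))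
    (hdec : StrictAntiOn f (Icc m b)) (hcont : ContinuousOn f (Icc 0 b)) (hm : m ∈ Icc 0 b)
    (h0 : f 0 ≤ ρ) (hb : f b ≤ ρ) (hρ : 0 ≤ ρ) (hlt : ρ < f m) :
    ∃ x₁ ∈ Ico 0 m, ∃ x₂ ∈ Ioc m b, f x₁ = ρ ∧ f x₂ = ρ ∧
      ∀ x ∈ Ioc a b, f x = ρ → x = x₁ ∨ x = x₂ := by
  obtain ⟨x₁, hx₁, hfx₁⟩ := intermediate_value_Icc hm.1
    (hcont.mono (Icc_subset_Icc_right hm.2)) ⟨h0, hlt.le⟩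
  obtain ⟨x₂, hx₂, hfx₂⟩ := intermediate_value_Icc' hm.2
    (hcont.mono (Icc_subset_Icc_left hm.1)) ⟨hb, hlt.le⟩
  have hx₁m : x₁ ≠ m := by rintro rfl; exact hlt.ne' hfx₁
  have hx₂m : m ≠ x₂ := by rintro rfl; exact hlt.ne' hfx₂
  refine ⟨x₁, ⟨hx₁.1, hx₁.2.lt_of_ne hx₁m⟩, x₂, ⟨hx₂.1.lt_of_ne hx₂m, hx₂.2⟩, hfx₁, hfx₂,
    fun x hx hfx => ?_⟩
  have hx' := mem_Icc_of_nonneg_of_neg_on hneg hx (hfx ▸ hρ)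
  rcases le_total x m with hxm | hxm
  · exact .inl (hinc.injOn ⟨hx'.1, hxm⟩ hx₁ (hfx.trans hfx₁.symm))
  · exact .inr (hdec.injOn ⟨hxm, hx'.2⟩ hx₂ (hfx.trans hfx₂.symm))

lemma eq_of_sign_change (hpos : ∀ x ∈ Ico a m, 0 < f x) (hneg : ∀ x ∈ Ioc m b, f x < 0)
    {x : ℝ} (hx : x ∈ Icc a b) (hfx : f x = 0) : x = m := by
  rcases lt_trichotomy x m with h | h | h
  · exact absurd hfx (hpos x ⟨hx.1, h⟩).ne'
  · exact h
  · exact absurd hfx (hneg x ⟨h, hx.2⟩).ne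

end Unimodal

lemma gamma0_mem_Ioo {Q : ℕ} (hQ : 1 < Q) : gamma0 Q ∈ Ioo 0 1 := by
  have hs : 1 < √(Q : ℝ) := by rw [lt_sqrt zero_le_one, one_pow]; exact_mod_cast hQ
  have hinv : √(Q : ℝ) * (√(Q : ℝ))⁻¹ = 1 := mul_inv_cancel₀ (by positivity)
  have hden : 2 < √(Q : ℝ) + (√(Q : ℝ))⁻¹ := by nlinarith [mul_pos (sub_pos.2 hs) (sub_pos.2 hs)]
  exact ⟨div_pos two_pos (by linarith), (div_lt_one (by linarith)).2 hden⟩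

lemma abs_gamma0_lt_one {Q : ℕ} (hQ : 1 < Q) : |gamma0 Q| < 1 :=
  abs_lt.2 ⟨by linarith [(gamma0_mem_Ioo hQ).1], (gamma0_mem_Ioo hQ).2⟩

section Phase

variable {γ α : ℝ}

noncomputable def psiDeriv (γ α x : ℝ) : ℝ :=
  α / 2 * γ * (1 - γ * cos x) ^ (α / 2 - 1) * sin x

noncomputable def inflectionQuadratic (γ α c : ℝ) : ℝ :=
  c - α / 2 * γ * c ^ 2 + (α / 2 - 1) * γ

noncomputable def psiDeriv2 (γ α x : ℝ) : ℝ :=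
  α / 2 * γ * (1 - γ * cos x) ^ (α / 2 - 2) * inflectionQuadratic γ α (cos x)

lemma one_sub_mul_cos_pos (hγ : |γ| < 1) (x : ℝ) : 0 < 1 - γ * cos x := by
  have : |γ * cos x| ≤ |γ| := by
    rw [abs_mul]; exact mul_le_of_le_one_right (abs_nonneg γ) (abs_cos_le_one x)
  linarith [le_abs_self (γ * cos x)]

lemma hasDerivAt_one_sub_mul_cos_rpow (hγ : |γ| < 1) (p x : ℝ) :
    HasDerivAt (fun y => (1 - γ * cos y) ^ p)
      (p * (1 - γ * cos x) ^ (p - 1) * (γ * sin x)) x := by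
  have hinner : HasDerivAt (fun y => 1 - γ * cos y) (γ * sin x) x := by
    simpa using ((hasDerivAt_cos x).const_mul γ).const_sub 1
  exact (hasDerivAt_rpow_const (Or.inl (one_sub_mul_cos_pos hγ x).ne')).comp x hinner

lemma hasDerivAt_psi (hγ : |γ| < 1) (α x : ℝ) :
    HasDerivAt (fun y => (1 - γ * cos y) ^ (α / 2)) (psiDeriv γ α x) x :=
  (hasDerivAt_one_sub_mul_cos_rpow hγ (α / 2) x).congr_deriv (by unfold psiDeriv; ring)

lemma hasDerivAt_psiDeriv (hγ : |γ| < 1) (x : ℝ) :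
    HasDerivAt (psiDeriv γ α) (psiDeriv2 γ α x) x := by
  have h := ((hasDerivAt_one_sub_mul_cos_rpow hγ (α / 2 - 1) x).mul (hasDerivAt_sin x)).const_mul
    (α / 2 * γ)
  have hfun : psiDeriv γ α = fun y => α / 2 * γ * ((1 - γ * cos y) ^ (α / 2 - 1) * sin y) :=
    funext fun y => mul_assoc _ _ _
  rw [hfun]
  refine h.congr_deriv ?_
  have hu := one_sub_mul_cos_pos hγ x
  have hpow : (1 - γ * cos x) ^ (α / 2 - 1) = (1 - γ * cos x) ^ (α / 2 - 2) * (1 - γ * cos x) := by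
    rw [← rpow_add_one hu.ne']; ring_nf
  rw [psiDeriv2, inflectionQuadratic, show α / 2 - 1 - 1 = α / 2 - 2 by ring, hpow]
  linear_combination α / 2 * γ * (1 - γ * cos x) ^ (α / 2 - 2) * (α / 2 - 1) * γ * sin_sq x

lemma continuous_psiDeriv (hγ : |γ| < 1) : Continuous (psiDeriv γ α) :=
  continuous_iff_continuousAt.2 fun x => (hasDerivAt_psiDeriv hγ x).continuousAt

lemma strictMonoOn_psiDeriv (hγ : |γ| < 1) {a b : ℝ} (h : ∀ x ∈ Ioo a b, 0 < psiDeriv2 γ α x) :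
    StrictMonoOn (psiDeriv γ α) (Icc a b) :=
  strictMonoOn_of_deriv_pos (convex_Icc a b) (continuous_psiDeriv hγ).continuousOn fun x hx => by
    rw [interior_Icc] at hx
    exact (hasDerivAt_psiDeriv hγ x).deriv ▸ h x hx

lemma strictAntiOn_psiDeriv (hγ : |γ| < 1) {a b : ℝ} (h : ∀ x ∈ Ioo a b, psiDeriv2 γ α x < 0) :
    StrictAntiOn (psiDeriv γ α) (Icc a b) :=
  strictAntiOn_of_deriv_neg (convex_Icc a b) (continuous_psiDeriv hγ).continuousOn fun x hx => by
    rw [interior_Icc] at hx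
    exact (hasDerivAt_psiDeriv hγ x).deriv ▸ h x hx

lemma psiDeriv_zero : psiDeriv γ α 0 = 0 := by simp [psiDeriv]

lemma psiDeriv_pi : psiDeriv γ α π = 0 := by simp [psiDeriv]

lemma mul_one_sub_mul_cos_rpow_pos (hγ0 : 0 < γ) (hγ1 : γ < 1) (hα0 : 0 < α) (p x : ℝ) :
    0 < α / 2 * γ * (1 - γ * cos x) ^ p :=
  mul_pos (by positivity) (rpow_pos_of_pos (one_sub_mul_cos_pos (abs_lt.2 ⟨by linarith, hγ1⟩) x) _)

lemma psiDeriv_eq_zero_iff (hγ0 : 0 < γ) (hγ1 : γ < 1) (hα0 : 0 < α) (x : ℝ) :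
    psiDeriv γ α x = 0 ↔ ∃ k : ℤ, x = k * π := by
  rw [psiDeriv, mul_eq_zero, or_iff_right (mul_one_sub_mul_cos_rpow_pos hγ0 hγ1 hα0 _ x).ne', sin_eq_zero_iff]
  exact exists_congr fun k => eq_comm

lemma psiDeriv_pos (hγ0 : 0 < γ) (hγ1 : γ < 1) (hα0 : 0 < α) {x : ℝ} (hx : x ∈ Ioo 0 π) :
    0 < psiDeriv γ α x :=
  mul_pos (mul_one_sub_mul_cos_rpow_pos hγ0 hγ1 hα0 _ x) (sin_pos_of_pos_of_lt_pi hx.1 hx.2)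

lemma psiDeriv_neg (hγ0 : 0 < γ) (hγ1 : γ < 1) (hα0 : 0 < α) {x : ℝ} (hx : x ∈ Ioo (-π) 0) :
    psiDeriv γ α x < 0 :=
  mul_neg_of_pos_of_neg (mul_one_sub_mul_cos_rpow_pos hγ0 hγ1 hα0 _ x) (sin_neg_of_neg_of_neg_pi_lt hx.2 hx.1)

lemma exists_root_inflectionQuadratic (hγ0 : 0 < γ) (hγ1 : γ < 1) (hα0 : 0 < α) (hα2 : α < 2) :
    ∃ c₀ ∈ Ioo (0 : ℝ) 1, inflectionQuadratic γ α c₀ = 0 ∧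
      (∀ c ≤ 1, c₀ < c → 0 < inflectionQuadratic γ α c) ∧
      ∀ c < c₀, inflectionQuadratic γ α c < 0 := by
  set q := inflectionQuadratic γ α
  have hq0 : q 0 < 0 := by simp only [q, inflectionQuadratic]; nlinarith
  have hq1 : q 1 = 1 - γ := by simp only [q, inflectionQuadratic]; ring
  have hqcont : Continuous q :=
    (by fun_prop : Continuous fun c : ℝ => c - α / 2 * γ * c ^ 2 + (α / 2 - 1) * γ)
  obtain ⟨c₀, ⟨hc0, hc1⟩, hroot⟩ :=
    intermediate_value_Ioo zero_le_one hqcont.continuousOn ⟨hq0, by linarith⟩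
  have hfactor : ∀ c, q c = (c - c₀) * (1 - α / 2 * γ * (c + c₀)) := by
    intro c
    simp only [q, inflectionQuadratic] at hroot ⊢
    linear_combination hroot
  -- the second factor decreases in `c` and is positive at `c = 1`, where `q 1 > 0`
  have hsecond : ∀ c ≤ 1, 0 < 1 - α / 2 * γ * (c + c₀) := by
    have h1 := hfactor 1
    rw [hq1] at h1
    intro c hc
    nlinarith [mul_nonneg (by positivity : (0 : ℝ) ≤ α / 2 * γ) (sub_nonneg.2 hc)]
  refine ⟨c₀, ⟨hc0, hc1⟩, hroot, fun c hc hlt => ?_, fun c hlt => ?_⟩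
  · rw [hfactor]; exact mul_pos (sub_pos.2 hlt) (hsecond c hc)
  · rw [hfactor]; exact mul_neg_of_neg_of_pos (sub_neg.2 hlt) (hsecond c (hlt.le.trans hc1.le))

lemma exists_inflection_psiDeriv2 (hγ0 : 0 < γ) (hγ1 : γ < 1) (hα0 : 0 < α) (hα2 : α < 2) :
    ∃ lam0 ∈ Ioo 0 (π / 2), psiDeriv2 γ α lam0 = 0 ∧
      (∀ x ∈ Ico 0 lam0, 0 < psiDeriv2 γ α x) ∧ ∀ x ∈ Ioc lam0 π, psiDeriv2 γ α x < 0 := by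
  obtain ⟨c₀, ⟨hc0, hc1⟩, hroot, hpos, hneg⟩ :=
    exists_root_inflectionQuadratic hγ0 hγ1 hα0 hα2
  have hcos : cos (arccos c₀) = c₀ := cos_arccos (by linarith) hc1.le
  have hlt0 : 0 < arccos c₀ := arccos_pos.2 hc1
  have hltpi : arccos c₀ < π := by linarith [arccos_lt_pi_div_two.2 hc0, pi_pos]
  refine ⟨arccos c₀, ⟨hlt0, arccos_lt_pi_div_two.2 hc0⟩, by rw [psiDeriv2, hcos, hroot, mul_zero],
    fun x hx => ?_, fun x hx => ?_⟩
  · have : c₀ < cos x := hcos ▸ cos_lt_cos_of_nonneg_of_le_pi hx.1 hltpi.le hx.2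
    exact mul_pos (mul_one_sub_mul_cos_rpow_pos hγ0 hγ1 hα0 _ x) (hpos _ (cos_le_one x) this)
  · have : cos x < c₀ := hcos ▸ cos_lt_cos_of_nonneg_of_le_pi hlt0.le hx.2 hx.1
    exact mul_neg_of_pos_of_neg (mul_one_sub_mul_cos_rpow_pos hγ0 hγ1 hα0 _ x) (hneg _ this)

end Phase

section Tree

variable {Q : ℕ}

lemma hasDerivAt_psiTree (hQ : 1 < Q) (α x : ℝ) : HasDerivAt (psiTree Q α) (psiDeriv (gamma0 Q) α x) x :=
  hasDerivAt_psi (abs_gamma0_lt_one hQ) α x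

lemma deriv_psiTree (hQ : 1 < Q) (α : ℝ) : deriv (psiTree Q α) = psiDeriv (gamma0 Q) α :=
  funext fun x => (hasDerivAt_psiTree hQ α x).deriv

lemma iteratedDeriv_two_psiTree (hQ : 1 < Q) (α : ℝ) : iteratedDeriv 2 (psiTree Q α) = psiDeriv2 (gamma0 Q) α := by
  rw [iteratedDeriv_succ, iteratedDeriv_one, deriv_psiTree hQ α]
  exact funext fun x => (hasDerivAt_psiDeriv (abs_gamma0_lt_one hQ) x).deriv

lemma deriv_tilt_psiTree_eq_zero_iff (hQ : 1 < Q) (α : ℝ) {t : ℝ} (ht : t ≠ 0) (r x : ℝ) :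
    deriv (fun y => t * psiTree Q α y - r * y) x = 0 ↔ psiDeriv (gamma0 Q) α x = r / t := by
  have h : HasDerivAt (fun y => t * psiTree Q α y - r * y) (t * psiDeriv (gamma0 Q) α x - r) x :=
    (((hasDerivAt_psiTree hQ α x).const_mul t).sub ((hasDerivAt_id x).const_mul r)).congr_deriv
      (by rw [mul_one])
  rw [h.deriv, sub_eq_zero, eq_div_iff ht, mul_comm]

end Tree

theorem stmt16 (Q : ℕ) (hQ : 2 ≤ Q) (α : ℝ) (hα0 : 0 < α) (hα2 : α < 2) :
    -- (i) the stationary points of ψ are exactly πℤ, with ψ″(0) > 0 and ψ″(π) < 0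
    (∀ lam : ℝ, deriv (psiTree Q α) lam = 0 ↔ ∃ k : ℤ, lam = k * Real.pi) ∧
    0 < iteratedDeriv 2 (psiTree Q α) 0 ∧
    iteratedDeriv 2 (psiTree Q α) Real.pi < 0 ∧
    -- (ii) unique zero λ₀ ∈ (0, π) of ψ″, lying in (0, π/2), with sign change
    (∃ lam0 : ℝ, lam0 ∈ Set.Ioo 0 Real.pi ∧ lam0 ∈ Set.Ioo 0 (Real.pi / 2) ∧
      iteratedDeriv 2 (psiTree Q α) lam0 = 0 ∧
      (∀ lam ∈ Set.Ioo (0 : ℝ) Real.pi,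
        iteratedDeriv 2 (psiTree Q α) lam = 0 → lam = lam0) ∧
      (∀ lam ∈ Set.Ico (0 : ℝ) lam0, 0 < iteratedDeriv 2 (psiTree Q α) lam) ∧
      (∀ lam ∈ Set.Ioc lam0 Real.pi, iteratedDeriv 2 (psiTree Q α) lam < 0) ∧
      -- ψ′ strictly increases on [0, λ₀] from 0 to M := ψ′(λ₀) > 0,
      -- and strictly decreases on [λ₀, π] from M to 0
      StrictMonoOn (deriv (psiTree Q α)) (Set.Icc 0 lam0) ∧
      StrictAntiOn (deriv (psiTree Q α)) (Set.Icc lam0 Real.pi) ∧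
      deriv (psiTree Q α) 0 = 0 ∧
      deriv (psiTree Q α) Real.pi = 0 ∧
      0 < deriv (psiTree Q α) lam0 ∧
      -- (iii) stationary points of ψ_{t,r}(λ) = t·ψ(λ) − r·λ on (−π, π]
      (∀ t r : ℝ, 0 < t → 0 ≤ r →
        (deriv (psiTree Q α) lam0 < r / t →
          ∀ lam ∈ Set.Ioc (-Real.pi) Real.pi,
            deriv (fun x => t * psiTree Q α x - r * x) lam ≠ 0) ∧
        (r / t = deriv (psiTree Q α) lam0 →
          ∃! lam : ℝ, lam ∈ Set.Ioc (-Real.pi) Real.pi ∧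
            deriv (fun x => t * psiTree Q α x - r * x) lam = 0) ∧
        (r / t < deriv (psiTree Q α) lam0 →
          ∃ lam1 ∈ Set.Ico (0 : ℝ) lam0, ∃ lam2 ∈ Set.Ioc lam0 Real.pi,
            deriv (fun x => t * psiTree Q α x - r * x) lam1 = 0 ∧
            deriv (fun x => t * psiTree Q α x - r * x) lam2 = 0 ∧
            ∀ lam ∈ Set.Ioc (-Real.pi) Real.pi,
              deriv (fun x => t * psiTree Q α x - r * x) lam = 0 →
                lam = lam1 ∨ lam = lam2))) := by
  obtain ⟨hγ0, hγ1⟩ := gamma0_mem_Ioo hQ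
  have hγ := abs_gamma0_lt_one hQ
  obtain ⟨lam0, ⟨h0, hhalf⟩, hzero, hpos, hneg⟩ := exists_inflection_psiDeriv2 hγ0 hγ1 hα0 hα2
  have hpi : lam0 < π := by linarith [pi_pos]
  have hm : lam0 ∈ Icc 0 π := ⟨h0.le, hpi.le⟩
  have hinc := strictMonoOn_psiDeriv hγ fun x hx => hpos x ⟨hx.1.le, hx.2⟩
  have hdec := strictAntiOn_psiDeriv hγ fun x hx => hneg x ⟨hx.1, hx.2.le⟩
  have hleft : ∀ x ∈ Ioo (-π) 0, psiDeriv (gamma0 Q) α x < 0 := fun x hx =>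
    psiDeriv_neg hγ0 hγ1 hα0 hx
  have hM := psiDeriv_pos hγ0 hγ1 hα0 ⟨h0, hpi⟩
  rw [deriv_psiTree hQ α, iteratedDeriv_two_psiTree hQ α]
  refine ⟨psiDeriv_eq_zero_iff hγ0 hγ1 hα0, hpos 0 ⟨le_rfl, h0⟩, hneg π ⟨hpi, le_rfl⟩, lam0,
    ⟨h0, hpi⟩, ⟨h0, hhalf⟩, hzero, fun x hx => eq_of_sign_change hpos hneg (Ioo_subset_Icc_self hx),
    hpos, hneg, hinc, hdec, psiDeriv_zero, psiDeriv_pi, hM, fun t r ht hr => ?_⟩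
  have hρ : 0 ≤ r / t := div_nonneg hr ht.le
  simp only [ne_eq, deriv_tilt_psiTree_eq_zero_iff hQ α ht.ne']
  refine ⟨fun hlt => ne_of_peak_lt hleft hinc hdec hm hρ hlt, fun heq => ?_, fun hlt => ?_⟩
  · rw [heq]
    exact existsUnique_eq_peak hleft hinc hdec (neg_lt_zero.2 pi_pos) hm hM.le
  · exact exists_two_eq_of_lt_peak hleft hinc hdec (continuous_psiDeriv hγ).continuousOn hm
      (psiDeriv_zero.trans_le hρ) (psiDeriv_pi.trans_le hρ) hρ hlt
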